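/- arXiv:2201.09340 — 2 statements merged into one kernel-verified Lean document; each statement's English description precedes it below -/
import Mathlib

section
/- There is an absolute constant c₀ > 0 such that for every d ∈ ℕ there exist a finite simple graph G and a coin model (c, r) of G with the following property: for every Koebe ordering ⪯ of G with respect to (c, r), there exists a vertex u of G with |SReach_d[u]| ≥ c₀·d². -/
open Metric

/-- A coin model of a simple graph `G`: centers `c` and positive radii `r` such that the
open disks are pairwise disjoint and closed disks of adjacent vertices intersect. -/
structure IsCoinModel {V : Type*} (G : SimpleGraph V)
    (c : V → EuclideanSpace ℝ (Fin 2)) (r : V → ℝ) : Prop where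
  r_pos : ∀ v, 0 < r v
  disj : ∀ u v, u ≠ v → Disjoint (ball (c u) (r u)) (ball (c v) (r v))
  touch : ∀ u v, G.Adj u v →
    (closedBall (c u) (r u) ∩ closedBall (c v) (r v)).Nonempty

/-- The set of vertices strongly `d`-reachable from `u` with respect to the order
relation `le`: vertices `w ⪯ u` joined to `u` by a path of length at most `d` all of
whose internal vertices are strictly `≻ u`. -/
def SReach {V : Type*} (G : SimpleGraph V) (le : V → V → Prop) (d : ℕ) (u : V) :
    Set V :=
  {w | le w u ∧ ∃ p : G.Walk u w, p.IsPath ∧ p.length ≤ d ∧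
    ∀ x ∈ p.support, x ≠ u → x ≠ w → (le u x ∧ x ≠ u)}

/-!
Build a comb of coins: a root coin of radius 2, a spine and vertical teeth of unit coins, and
`m²` target coins of radius 3 hanging off the teeth, each within graph distance `7m + 1` of the
root. In any Koebe ordering every target precedes the root while every unit coin comes after it,
so each target is strongly `d`-reachable from the root as soon as `d ≥ 8m`. Taking `m = d / 8`
gives `|SReach_d[root]| ≥ m² + 1 ≥ d² / 128`.
-/

open SimpleGraph

section SReach

variable {V : Type*} {G : SimpleGraph V} {le : V → V → Prop} {d : ℕ} {u w : V}

theorem mem_sReach_of_walk (hwu : le w u) (p : G.Walk u w) (hp : p.length ≤ d)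
    (hint : ∀ x ∈ p.support, x ≠ u → x ≠ w → le u x ∧ x ≠ u) : w ∈ SReach G le d u := by
  classical
  exact ⟨hwu, p.bypass, p.bypass_isPath, p.length_bypass_le_length.trans hp,
    fun x hx => hint x (p.support_bypass_subset_support hx)⟩

theorem self_mem_sReach [Std.Refl le] : u ∈ SReach G le d u :=
  mem_sReach_of_walk (refl u) .nil (Nat.zero_le d) (by simp)

theorem mem_sReach_of_walk_of_radius_lt {r : V → ℝ} (hko : ∀ a b, r b < r a → le a b)
    (hwu : r u < r w) (p : G.Walk u w) (hp : p.length ≤ d)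
    (hint : ∀ x ∈ p.support, x ≠ u → x ≠ w → r x < r u) : w ∈ SReach G le d u :=
  mem_sReach_of_walk (hko _ _ hwu) p hp fun x hx hxu hxw => ⟨hko _ _ (hint x hx hxu hxw), hxu⟩

end SReach

theorem SimpleGraph.exists_walk_of_adj_succ {V : Type*} {G : SimpleGraph V} (f : ℕ → V) {n : ℕ}
    (h : ∀ i < n, G.Adj (f i) (f (i + 1))) {u w : V} (hu : f 0 = u) (hw : f n = w) :
    ∃ p : G.Walk u w, p.length = n ∧ ∀ x ∈ p.support, ∃ i ≤ n, f i = x := by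
  subst hu hw
  induction n with
  | zero => exact ⟨.nil, rfl, by simp⟩
  | succ n ih =>
    obtain ⟨p, hlen, hsupp⟩ := ih fun i hi => h i (by omega)
    refine ⟨p.concat (h n n.lt_succ_self), by simp [hlen], fun x hx => ?_⟩
    rw [Walk.support_concat, List.mem_append, List.mem_singleton] at hx
    rcases hx with hx | rfl
    · obtain ⟨i, hi, rfl⟩ := hsupp x hx
      exact ⟨i, by omega, rfl⟩
    · exact ⟨n + 1, le_rfl, rfl⟩

theorem SimpleGraph.Walk.length_induce {V : Type*} {G : SimpleGraph V} (s : Set V) {u v : V}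
    (p : G.Walk u v) (hp : ∀ x ∈ p.support, x ∈ s) : (p.induce s hp).length = p.length := by
  have h := congrArg Walk.length (p.map_induce hp)
  rwa [Walk.length_map] at h

section CoinModel

variable {V : Type*}

def closedBallGraph {α : Type*} [PseudoMetricSpace α] (c : V → α) (r : V → ℝ) :
    SimpleGraph V where
  Adj u v := u ≠ v ∧ (closedBall (c u) (r u) ∩ closedBall (c v) (r v)).Nonempty
  symm := ⟨fun _ _ h => ⟨h.1.symm, by rw [Set.inter_comm]; exact h.2⟩⟩
  loopless := ⟨fun _ h => h.1 rfl⟩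

theorem closedBallGraph_adj_iff {α : Type*} [PseudoMetricSpace α] {c : V → α} {r : V → ℝ}
    {u v : V} : (closedBallGraph c r).Adj u v ↔
      u ≠ v ∧ (closedBall (c u) (r u) ∩ closedBall (c v) (r v)).Nonempty :=
  Iff.rfl

theorem closedBallGraph_adj {E : Type*} [NormedAddCommGroup E] [NormedSpace ℝ E]
    {c : V → E} {r : V → ℝ} {u v : V} (huv : u ≠ v) (hu : 0 ≤ r u) (hv : 0 ≤ r v)
    (h : dist (c u) (c v) ≤ r u + r v) : (closedBallGraph c r).Adj u v :=
  closedBallGraph_adj_iff.mpr ⟨huv, Set.not_disjoint_iff_nonempty_inter.mp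
    ((disjoint_closedBall_closedBall_iff hu hv).not.mpr h.not_gt)⟩

theorem isCoinModel_closedBallGraph {c : V → EuclideanSpace ℝ (Fin 2)} {r : V → ℝ}
    (hr : ∀ v, 0 < r v) (hsep : Pairwise fun u v => r u + r v ≤ dist (c u) (c v)) :
    IsCoinModel (closedBallGraph c r) c r where
  r_pos := hr
  disj _ _ huv := ball_disjoint_ball (hsep huv)
  touch _ _ h := (closedBallGraph_adj_iff.mp h).2

theorem IsCoinModel.induce {G : SimpleGraph V} {c : V → EuclideanSpace ℝ (Fin 2)} {r : V → ℝ}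
    (h : IsCoinModel G c r) (s : Set V) :
    IsCoinModel (G.induce s) (fun v => c v) (fun v => r v) where
  r_pos v := h.r_pos v
  disj _ _ huv := h.disj _ _ (Subtype.coe_injective.ne huv)
  touch _ _ huv := h.touch _ _ huv

end CoinModel

theorem EuclideanSpace.abs_sub_le_dist {ι : Type*} [Fintype ι] (x y : EuclideanSpace ℝ ι)
    (i : ι) : |x i - y i| ≤ dist x y := by
  simpa [Real.dist_eq] using PiLp.dist_apply_le x y i

noncomputable def latticePoint (p : ℤ × ℤ) : EuclideanSpace ℝ (Fin 2) := !₂[p.1, p.2]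

theorem le_dist_latticePoint {p q : ℤ × ℤ} {k : ℤ} (h : k ≤ max |p.1 - q.1| |p.2 - q.2|) :
    (k : ℝ) ≤ dist (latticePoint p) (latticePoint q) := by
  have h0 := EuclideanSpace.abs_sub_le_dist (latticePoint p) (latticePoint q) 0
  have h1 := EuclideanSpace.abs_sub_le_dist (latticePoint p) (latticePoint q) 1
  simp only [latticePoint, PiLp.toLp_apply, Matrix.cons_val_zero, Matrix.cons_val_one] at h0 h1
  exact (show (k : ℝ) ≤ max |(p.1 : ℝ) - q.1| |(p.2 : ℝ) - q.2| by exact_mod_cast h).trans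
    (max_le h0 h1)

theorem dist_latticePoint_le (p q : ℤ × ℤ) :
    dist (latticePoint p) (latticePoint q) ≤ ((|p.1 - q.1| + |p.2 - q.2| : ℤ) : ℝ) := by
  rw [EuclideanSpace.dist_eq, Real.sqrt_le_iff]
  simp only [latticePoint, Fin.sum_univ_two, Real.dist_eq, sq_abs, PiLp.toLp_apply,
    Matrix.cons_val_zero, Matrix.cons_val_one]
  push_cast
  constructor
  · positivity
  · nlinarith [abs_mul_abs_self ((p.1 : ℝ) - q.1), abs_mul_abs_self ((p.2 : ℝ) - q.2),
      abs_nonneg ((p.1 : ℝ) - q.1), abs_nonneg ((p.2 : ℝ) - q.2)]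

inductive Comb
  | root
  | spine (a : ℕ)
  | tooth (t b : ℕ)
  | target (t s : ℕ)
  deriving DecidableEq

namespace Comb

/- All centers are lattice points. The root sits at the left end of a horizontal spine of unit
coins; tooth `t` is a vertical column of unit coins standing on spine coin `4 * t + 3`, and its
coin `3 * s + 2` touches the target `(t, s)` from the left. -/
def pos : Comb → ℤ × ℤ
  | root => (-1, 0)
  | spine a => (2 * a + 2, 0)
  | tooth t b => (8 * t + 8, 2 * b + 2)
  | target t s => (8 * t + 12, 6 * s + 6)

def rad : Comb → ℤ
  | root => 2
  | spine _ | tooth _ _ => 1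
  | target _ _ => 3

theorem rad_add_rad_le {x y : Comb} (hxy : x ≠ y) :
    x.rad + y.rad ≤ max |x.pos.1 - y.pos.1| |x.pos.2 - y.pos.2| := by
  cases x <;> cases y <;>
    simp_all only [pos, rad, ne_eq, reduceCtorEq, not_true_eq_false, not_false_eq_true,
      spine.injEq, tooth.injEq, target.injEq, abs_eq_max_neg] <;> omega

noncomputable def center (x : Comb) : EuclideanSpace ℝ (Fin 2) := latticePoint x.pos

abbrev radius (x : Comb) : ℝ := x.rad

noncomputable def graph : SimpleGraph Comb := closedBallGraph center radius

theorem radius_pos (x : Comb) : 0 < x.radius := by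
  cases x <;> norm_num [rad]

theorem isCoinModel : IsCoinModel graph center radius :=
  isCoinModel_closedBallGraph radius_pos fun _ _ hxy => by
    exact_mod_cast le_dist_latticePoint (rad_add_rad_le hxy)

theorem graph_adj {x y : Comb} (hxy : x ≠ y)
    (h : |x.pos.1 - y.pos.1| + |x.pos.2 - y.pos.2| ≤ x.rad + y.rad) : graph.Adj x y :=
  closedBallGraph_adj hxy (radius_pos x).le (radius_pos y).le
    ((dist_latticePoint_le _ _).trans (by exact_mod_cast h))

/- The walk root, spine coins `0, …, 4 * t + 3`, tooth coins `0, …, 3 * s + 2` of tooth `t`,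
target `(t, s)`. -/
def route (t s : ℕ) : ℕ → Comb
  | 0 => root
  | i + 1 =>
    if i < 4 * t + 4 then spine i
    else if i < 4 * t + 3 * s + 7 then tooth t (i - (4 * t + 4))
    else target t s

theorem route_adj (t s : ℕ) {i : ℕ} (hi : i < 4 * t + 3 * s + 8) :
    graph.Adj (route t s i) (route t s (i + 1)) := by
  apply graph_adj <;> rcases i with _ | i <;> simp only [route] <;> split_ifs <;>
    simp only [pos, rad, ne_eq, reduceCtorEq, not_false_eq_true, spine.injEq, tooth.injEq,
      abs_eq_max_neg] <;> omega

def finset (m : ℕ) : Finset Comb :=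
  insert root <| (Finset.range (4 * m)).image spine ∪
    (Finset.range m ×ˢ Finset.range (3 * m)).image (fun p => tooth p.1 p.2) ∪
    (Finset.range m ×ˢ Finset.range m).image (fun p => target p.1 p.2)

theorem route_mem_finset {m t s i : ℕ} (ht : t < m) (hs : s < m) (hi : i ≤ 4 * t + 3 * s + 8) :
    route t s i ∈ finset m := by
  rcases i with _ | i <;> simp only [route] <;> (try split_ifs) <;> simp [finset] <;> omega

theorem route_last (t s : ℕ) : route t s (4 * t + 3 * s + 8) = target t s := by
  simp [route]
  omega

theorem rad_route {t s i : ℕ} (hi0 : 0 < i) (hi : i < 4 * t + 3 * s + 8) :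
    (route t s i).rad = 1 := by
  obtain ⟨i, rfl⟩ := Nat.exists_eq_add_of_lt hi0
  simp only [route, zero_add]
  split_ifs <;> first | rfl | omega

theorem root_mem_finset (m : ℕ) : root ∈ finset m :=
  Finset.mem_insert_self _ _

theorem target_mem_finset {m t s : ℕ} (ht : t < m) (hs : s < m) : target t s ∈ finset m := by
  simp [finset, ht, hs]

theorem target_mem_sReach {m d t s : ℕ} (ht : t < m) (hs : s < m)
    (hd : 4 * t + 3 * s + 8 ≤ d) {le : finset m → finset m → Prop}
    (hko : ∀ a b : finset m, radius b < radius a → le a b) :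
    ⟨target t s, target_mem_finset ht hs⟩ ∈
      SReach (graph.induce (finset m)) le d ⟨root, root_mem_finset m⟩ := by
  obtain ⟨p, hlen, hsupp⟩ := exists_walk_of_adj_succ (G := graph) (route t s)
    (fun _ => route_adj t s) (u := root) rfl (route_last t s)
  have hp_mem : ∀ x ∈ p.support, x ∈ (finset m : Set Comb) := fun x hx => by
    obtain ⟨i, hi, rfl⟩ := hsupp x hx
    exact route_mem_finset ht hs hi
  refine mem_sReach_of_walk_of_radius_lt hko (by norm_num [rad]) (p.induce _ hp_mem)
    (by rw [Walk.length_induce]; omega) ?_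
  rintro ⟨x, hxS⟩ hx hxu hxw
  rw [Walk.support_induce, List.mem_attachWith] at hx
  obtain ⟨i, hi, rfl⟩ := hsupp _ hx
  have hi0 : 0 < i := Nat.pos_of_ne_zero fun h => hxu (by simp [h, route])
  have hin : i < 4 * t + 3 * s + 8 := hi.lt_of_ne fun h => hxw (by simp [h, route_last])
  show ((route t s i).rad : ℝ) < (root.rad : ℝ)
  rw [rad_route hi0 hin]
  norm_num [rad]

theorem card_le_ncard_sReach {m d : ℕ} (hd : 8 * m ≤ d) {le : finset m → finset m → Prop}
    [Std.Refl le] (hko : ∀ a b : finset m, radius b < radius a → le a b) :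
    m * m + 1 ≤ (SReach (graph.induce (finset m)) le d ⟨root, root_mem_finset m⟩).ncard := by
  let f : Option (Fin m × Fin m) → finset m := fun o =>
    o.elim ⟨root, root_mem_finset m⟩ fun p => ⟨target p.1 p.2, target_mem_finset p.1.2 p.2.2⟩
  have hf : f.Injective := by
    rintro (_ | ⟨t, s⟩) (_ | ⟨t', s'⟩) h <;> simp_all [f, Fin.ext_iff]
  have hsub : Set.range f ⊆ SReach (graph.induce (finset m)) le d ⟨root, root_mem_finset m⟩ := by
    rintro _ ⟨_ | ⟨t, s⟩, rfl⟩
    · exact self_mem_sReach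
    · exact target_mem_sReach t.2 s.2 (by omega) hko
  calc m * m + 1 = (Set.range f).ncard := by simp [Set.ncard_range_of_injective hf]
    _ ≤ _ := Set.ncard_le_ncard hsub (Set.toFinite _)

end Comb

/-- There is a planar graph with a coin model all of whose Koebe orderings have strong
`d`-coloring number at least `c₀·d²`. -/
theorem koebe_sreach_lower_bound :
    ∃ c₀ : ℝ, 0 < c₀ ∧
      ∀ d : ℕ,
        ∃ (V : Type) (_ : Fintype V) (G : SimpleGraph V)
          (c : V → EuclideanSpace ℝ (Fin 2)) (r : V → ℝ),
          IsCoinModel G c r ∧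
          ∀ le : V → V → Prop, IsLinearOrder V le →
            (∀ a b : V, r b < r a → le a b) →
            ∃ u : V, c₀ * (d : ℝ) ^ 2 ≤ ((SReach G le d u).ncard : ℝ) := by
  refine ⟨1 / 128, by norm_num, fun d => ?_⟩
  set m := d / 8
  refine ⟨Comb.finset m, inferInstance, Comb.graph.induce (Comb.finset m), fun v => Comb.center v,
    fun v => Comb.radius v, Comb.isCoinModel.induce _,
    fun le _ hko => ⟨⟨.root, Comb.root_mem_finset m⟩, ?_⟩⟩
  have hcard := Comb.card_le_ncard_sReach (Nat.mul_div_le d 8) hko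
  have hd : (d : ℝ) < 8 * (m + 1) := by exact_mod_cast (show d < 8 * (m + 1) by omega)
  calc 1 / 128 * (d : ℝ) ^ 2 ≤ m * m + 1 := by
        nlinarith [sq_nonneg ((m : ℝ) - 1), (Nat.cast_nonneg d : (0 : ℝ) ≤ d)]
    _ ≤ _ := by exact_mod_cast hcard
end

section
/- There is an absolute constant c₀ > 0 such that for every d ∈ ℕ there exist a finite simple graph G and a coin model (c, r) of G with the following property: for every Koebe ordering ⪯ of G with respect to (c, r), there exists a vertex u of G with |WReach_d[u]| ≥ c₀·d³. -/
open Metric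

/-- The set of vertices weakly `d`-reachable from `u` with respect to the order
relation `le`: vertices `w ⪯ u` joined to `u` by a path of length at most `d` all of
whose vertices are `⪰ w`. -/
def WReach {V : Type*} (G : SimpleGraph V) (le : V → V → Prop) (d : ℕ) (u : V) :
    Set V :=
  {w | le w u ∧ ∃ p : G.Walk u w, p.IsPath ∧ p.length ≤ d ∧ ∀ x ∈ p.support, le w x}


/-!
The graph is a three-level comb. A trunk of `s + 1` coins lies on a horizontal line with radii
growing geometrically; on the `m`-th trunk coin stands a vertical column of `2s` further coins of
the same radius, and from every other column coin a horizontal tooth of `s` coins leaves to the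
left with radii increasing along it. The radius of a tooth coin exceeds that of every coin on its
path back to the first trunk coin, so in every Koebe ordering all `(s + 1) s²` tooth coins are
weakly `4s`-reachable from the first trunk coin; taking `s = ⌊d / 4⌋` gives order `d³` of them.
Equal radii along a column and a large growth factor between combs make every two coins
separated along a coordinate axis, so disjointness reduces to one-dimensional inequalities.
-/

open SimpleGraph Finset

/-- The center of the `k`-th coin in a row of consecutively tangent coins of radii
`ρ 0, ρ 1, …` whose first center is `0`. -/
def chainCenter (ρ : ℕ → ℝ) (k : ℕ) : ℝ := ∑ i ∈ range k, (ρ i + ρ (i + 1))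

@[simp]
lemma chainCenter_zero (ρ : ℕ → ℝ) : chainCenter ρ 0 = 0 := sum_range_zero _

lemma chainCenter_succ (ρ : ℕ → ℝ) (k : ℕ) :
    chainCenter ρ (k + 1) = chainCenter ρ k + (ρ k + ρ (k + 1)) :=
  sum_range_succ _ _

lemma add_le_chainCenter_sub {ρ : ℕ → ℝ} (hρ : ∀ i, 0 ≤ ρ i) {i j : ℕ} (hij : i < j) :
    ρ i + ρ j ≤ chainCenter ρ j - chainCenter ρ i := by
  induction j, hij using Nat.le_induction with
  | base => rw [chainCenter_succ]; linarith
  | succ j _ ih => rw [chainCenter_succ]; linarith [hρ j]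

lemma disjoint_ball_of_apply_add_le {ι : Type*} [Fintype ι] {p q : EuclideanSpace ℝ ι}
    {δ ε : ℝ} (i : ι) (h : p i + δ ≤ q i - ε) : Disjoint (ball p δ) (ball q ε) := by
  refine ball_disjoint_ball ?_
  have := PiLp.dist_apply_le p q i
  rw [Real.dist_eq, abs_sub_comm] at this
  linarith [le_abs_self (q i - p i)]

lemma closedBall_inter_closedBall_nonempty {E : Type*} [NormedAddCommGroup E]
    [NormedSpace ℝ E] {x y : E} {δ ε : ℝ} (hδ : 0 ≤ δ) (hε : 0 ≤ ε) (h : dist x y ≤ δ + ε) :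
    (closedBall x δ ∩ closedBall y ε).Nonempty :=
  Set.not_disjoint_iff_nonempty_inter.mp fun hd =>
    ((disjoint_closedBall_closedBall_iff hδ hε).mp hd).not_ge h

lemma dist_vec2_eq_abs_sub_fst {x x' y y' : ℝ} (hy : y = y') :
    dist !₂[x, y] !₂[x', y'] = |x - x'| := by
  simp [EuclideanSpace.dist_eq, Fin.sum_univ_two, Real.dist_eq, Real.sqrt_sq_eq_abs, hy]

lemma dist_vec2_eq_abs_sub_snd {x x' y y' : ℝ} (hx : x = x') :
    dist !₂[x, y] !₂[x', y'] = |y - y'| := by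
  simp [EuclideanSpace.dist_eq, Fin.sum_univ_two, Real.dist_eq, Real.sqrt_sq_eq_abs, hx]

lemma mem_wreach_self {V : Type*} (G : SimpleGraph V) (le : V → V → Prop) [Std.Refl le]
    (d : ℕ) (u : V) : u ∈ WReach G le d u :=
  ⟨refl_of le u, .nil, .nil, Nat.zero_le d, by simp [refl_of le u]⟩

def UphillReach {V : Type*} (G : SimpleGraph V) (r : V → ℝ) (ℓ : ℕ) (u v : V) : Prop :=
  ∃ p : G.Walk u v, p.length ≤ ℓ ∧ ∀ x ∈ p.support, r x ≤ r v

namespace UphillReach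

variable {V : Type*} {G : SimpleGraph V} {r : V → ℝ} {ℓ : ℕ} {u v w : V}

lemma refl (G : SimpleGraph V) (r : V → ℝ) (u : V) : UphillReach G r 0 u u :=
  ⟨.nil, le_rfl, by simp⟩

lemma step (h : UphillReach G r ℓ u v) (hvw : G.Adj v w) (hr : r v ≤ r w) :
    UphillReach G r (ℓ + 1) u w := by
  obtain ⟨p, hp, hsupp⟩ := h
  refine ⟨p.concat hvw, by simpa using hp, fun x hx => ?_⟩
  rw [Walk.support_concat, List.mem_append, List.mem_singleton] at hx
  rcases hx with hx | rfl
  · exact (hsupp x hx).trans hr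
  · exact le_rfl

lemma mem_wreach (h : UphillReach G r ℓ u v) (hvw : G.Adj v w) (hr : r v < r w)
    {le : V → V → Prop} [Std.Refl le] (hle : ∀ a b, r b < r a → le a b) {d : ℕ}
    (hd : ℓ + 1 ≤ d) : w ∈ WReach G le d u := by
  classical
  obtain ⟨p, hp, hsupp⟩ := h
  have hle_w : ∀ x ∈ (p.concat hvw).support, le w x := by
    intro x hx
    rw [Walk.support_concat, List.mem_append, List.mem_singleton] at hx
    rcases hx with hx | rfl
    · exact hle _ _ ((hsupp x hx).trans_lt hr)
    · exact refl_of le x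
  have hlen : (p.concat hvw).length ≤ d := by rw [Walk.length_concat]; omega
  exact ⟨hle_w u (Walk.start_mem_support _), (p.concat hvw).bypass, Walk.bypass_isPath _,
    (Walk.length_bypass_le_length _).trans hlen,
    fun x hx => hle_w x (Walk.support_bypass_subset_support _ hx)⟩

end UphillReach

namespace KoebeComb

/-- `core m 0` is the `m`-th trunk coin and `core m j`, `j ≥ 1`, the coins of the column standing
on it; `tooth m t a` is the `a`-th coin of the tooth leaving `core m (2t + 2)`. -/
inductive Vertex (s : ℕ)
  | core (m : Fin (s + 1)) (j : Fin (2 * s + 1))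
  | tooth (m : Fin (s + 1)) (t : Fin s) (a : Fin s)
  deriving Fintype

open Vertex

variable {s : ℕ}

def comb : Vertex s → ℕ
  | core m _ => m
  | tooth m _ _ => m

/-- The growth factor `2 (s + 1)` lifts the teeth of comb `m + 1` above all of comb `m`. -/
def scale (s m : ℕ) : ℝ := (2 * (s + 1)) ^ m

def unitRadius (s b : ℕ) : ℝ := s + 1 + b

def trunkX (s m : ℕ) : ℝ := chainCenter (fun i => scale s i * unitRadius s 0) m

def radius : Vertex s → ℝ
  | core m _ => scale s m * unitRadius s 0
  | tooth m _ a => scale s m * unitRadius s (a + 1)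

def center : Vertex s → EuclideanSpace ℝ (Fin 2)
  | core m j => !₂[trunkX s m, scale s m * (2 * j * unitRadius s 0)]
  | tooth m t a =>
      !₂[trunkX s m - scale s m * chainCenter (unitRadius s) (a + 1),
        scale s m * (2 * (2 * t + 2) * unitRadius s 0)]

def Edge : Vertex s → Vertex s → Prop
  | core m j, core m' j' =>
      ((j : ℕ) = 0 ∧ (j' : ℕ) = 0 ∧ (m' : ℕ) = m + 1) ∨ (m = m' ∧ (j' : ℕ) = j + 1)
  | core m j, tooth m' t a => m = m' ∧ (j : ℕ) = 2 * t + 2 ∧ (a : ℕ) = 0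
  | tooth m t a, tooth m' t' a' => m = m' ∧ t = t' ∧ (a' : ℕ) = a + 1
  | tooth _ _ _, core _ _ => False

def graph (s : ℕ) : SimpleGraph (Vertex s) := fromRel Edge

def root (s : ℕ) : Vertex s := core 0 0

section Coordinates

variable (m : Fin (s + 1)) (j : Fin (2 * s + 1)) (t a : Fin s)

@[simp] lemma center_core_zero : center (core m j) 0 = trunkX s m := rfl

@[simp] lemma center_core_one :
    center (core m j) 1 = scale s m * (2 * j * unitRadius s 0) := rfl

@[simp] lemma center_tooth_zero :
    center (tooth m t a) 0 = trunkX s m - scale s m * chainCenter (unitRadius s) (a + 1) := rfl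

@[simp] lemma center_tooth_one :
    center (tooth m t a) 1 = scale s m * (2 * (2 * t + 2) * unitRadius s 0) := rfl

end Coordinates

lemma scale_pos (s m : ℕ) : 0 < scale s m := by unfold scale; positivity

lemma scale_le_scale {m m' : ℕ} (h : m ≤ m') : scale s m ≤ scale s m' :=
  pow_le_pow_right₀ (by linarith [(s.cast_nonneg : (0 : ℝ) ≤ s)]) h

lemma two_mul_scale_le {m m' : ℕ} (h : m < m') : 2 * (s + 1) * scale s m ≤ scale s m' := by
  unfold scale
  rw [← pow_succ']
  exact pow_le_pow_right₀ (by linarith [(s.cast_nonneg : (0 : ℝ) ≤ s)]) h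

lemma unitRadius_pos (s b : ℕ) : 0 < unitRadius s b := by unfold unitRadius; positivity

lemma unitRadius_lt_unitRadius {b b' : ℕ} (h : b < b') : unitRadius s b < unitRadius s b' := by
  have : (b : ℝ) < b' := by exact_mod_cast h
  simp only [unitRadius]; linarith

lemma unitRadius_le_two_mul_unitRadius_zero {b : ℕ} (hb : b ≤ s + 1) :
    unitRadius s b ≤ 2 * unitRadius s 0 := by
  have : (b : ℝ) ≤ s + 1 := by exact_mod_cast hb
  simp only [unitRadius]; linarith

lemma radius_pos (v : Vertex s) : 0 < radius v := by
  cases v <;> exact mul_pos (scale_pos _ _) (unitRadius_pos _ _)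

lemma trunkX_add_le_sub {m m' : ℕ} (h : m < m') :
    trunkX s m + scale s m * unitRadius s 0 ≤ trunkX s m' - scale s m' * unitRadius s 0 := by
  have := add_le_chainCenter_sub (fun i => (mul_pos (scale_pos s i) (unitRadius_pos s 0)).le) h
  simp only [trunkX] at this ⊢
  linarith

lemma touch_of_edge {v w : Vertex s} (h : Edge v w) :
    (closedBall (center v) (radius v) ∩ closedBall (center w) (radius w)).Nonempty := by
  refine closedBall_inter_closedBall_nonempty (radius_pos v).le (radius_pos w).le ?_
  have hR (m b : ℕ) : 0 < scale s m * unitRadius s b :=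
    mul_pos (scale_pos s m) (unitRadius_pos s b)
  rcases v with ⟨m, j⟩ | ⟨m, t, a⟩ <;> rcases w with ⟨m', j'⟩ | ⟨m', t', a'⟩ <;>
    simp only [Edge] at h
  · rcases h with ⟨hj, hj', hm⟩ | ⟨rfl, hj⟩
    · rw [center, center, dist_vec2_eq_abs_sub_fst (by simp [hj, hj'])]
      simp only [radius, hm, trunkX, chainCenter_succ]
      rw [abs_sub_le_iff]
      constructor <;> linarith [hR m 0, hR (m + 1) 0]
    · rw [center, center, dist_vec2_eq_abs_sub_snd rfl]
      simp only [radius, hj]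
      push_cast
      rw [abs_sub_le_iff]
      constructor <;> linarith [hR m 0]
  · obtain ⟨rfl, hj, ha⟩ := h
    rw [center, center, dist_vec2_eq_abs_sub_fst (by simp [hj])]
    simp only [radius, ha, zero_add, chainCenter, sum_range_one]
    rw [abs_sub_le_iff]
    constructor <;> nlinarith [hR m 0, hR m 1]
  · obtain ⟨rfl, rfl, ha⟩ := h
    rw [center, center, dist_vec2_eq_abs_sub_fst rfl]
    simp only [radius, ha, chainCenter_succ]
    rw [abs_sub_le_iff]
    constructor <;> nlinarith [hR m (a + 1), hR m (a + 1 + 1)]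

lemma tooth_right_edge_le (m : Fin (s + 1)) (t a : Fin s) :
    center (tooth m t a) 0 + radius (tooth m t a) ≤ trunkX s m - scale s m * unitRadius s 0 := by
  have := add_le_chainCenter_sub (fun b => (unitRadius_pos s b).le) (Nat.succ_pos a)
  rw [chainCenter_zero, sub_zero] at this
  rw [center_tooth_zero, radius]
  nlinarith [scale_pos s m]

lemma right_edge_le (v : Vertex s) :
    center v 0 + radius v ≤ trunkX s (comb v) + scale s (comb v) * unitRadius s 0 := by
  rcases v with ⟨m, j⟩ | ⟨m, t, a⟩
  · exact le_rfl
  · have := tooth_right_edge_le m t a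
    have := mul_pos (scale_pos s m) (unitRadius_pos s 0)
    rw [comb]
    linarith

lemma top_edge_le (v : Vertex s) :
    center v 1 + radius v ≤ scale s (comb v) * ((4 * s + 2) * unitRadius s 0) := by
  have hw := unitRadius_pos s 0
  rcases v with ⟨m, j⟩ | ⟨m, t, a⟩ <;>
    simp only [center_core_one, center_tooth_one, radius, comb, ← mul_add] <;>
    refine mul_le_mul_of_nonneg_left ?_ (scale_pos s m).le
  · have hj : (j : ℝ) ≤ 2 * s := by exact_mod_cast Nat.le_of_lt_succ j.isLt
    nlinarith
  · have ht : (t : ℝ) + 1 ≤ s := by exact_mod_cast t.isLt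
    have := unitRadius_le_two_mul_unitRadius_zero (s := s) (b := a + 1) (by omega)
    nlinarith

lemma le_tooth_bottom_edge (m : Fin (s + 1)) (t a : Fin s) :
    scale s m * (2 * unitRadius s 0) ≤ center (tooth m t a) 1 - radius (tooth m t a) := by
  rw [center_tooth_one, radius, ← mul_sub]
  refine mul_le_mul_of_nonneg_left ?_ (scale_pos s m).le
  have := unitRadius_le_two_mul_unitRadius_zero (s := s) (b := a + 1) (by omega)
  nlinarith [unitRadius_pos s 0, (t.val.cast_nonneg : (0 : ℝ) ≤ t)]

def Separated (v w : Vertex s) : Prop :=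
  ∃ i, center v i + radius v ≤ center w i - radius w

lemma Separated.disjoint {v w : Vertex s} (h : Separated v w) :
    Disjoint (ball (center v) (radius v)) (ball (center w) (radius w)) :=
  let ⟨i, hi⟩ := h; disjoint_ball_of_apply_add_le i hi

lemma separated_of_comb_lt {v w : Vertex s} (h : comb v < comb w) : Separated v w := by
  rcases w with ⟨m', j'⟩ | ⟨m', t', a'⟩ <;> rw [comb] at h
  · refine ⟨0, ?_⟩
    have := trunkX_add_le_sub (s := s) h
    have := right_edge_le v
    rw [center_core_zero, radius]
    linarith
  · refine ⟨1, ?_⟩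
    have hP := mul_le_mul_of_nonneg_right (two_mul_scale_le (s := s) h)
      (mul_pos two_pos (unitRadius_pos s 0)).le
    have := top_edge_le v
    have := le_tooth_bottom_edge m' t' a'
    have := mul_pos (scale_pos s (comb v)) (unitRadius_pos s 0)
    nlinarith

lemma separated_core_core (m : Fin (s + 1)) {j j' : Fin (2 * s + 1)} (h : j < j') :
    Separated (core m j) (core m j') := by
  refine ⟨1, ?_⟩
  have hj : (j : ℝ) + 1 ≤ j' := by exact_mod_cast h
  simp only [center_core_one, radius]
  nlinarith [mul_pos (scale_pos s m) (unitRadius_pos s 0)]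

lemma separated_tooth_core (m : Fin (s + 1)) (t a : Fin s) (j : Fin (2 * s + 1)) :
    Separated (tooth m t a) (core m j) :=
  ⟨0, tooth_right_edge_le m t a⟩

lemma separated_tooth_tooth_of_row_lt (m : Fin (s + 1)) {t t' : Fin s} (a a' : Fin s) (h : t < t') :
    Separated (tooth m t a) (tooth m t' a') := by
  refine ⟨1, ?_⟩
  have ht : (t : ℝ) + 1 ≤ t' := by exact_mod_cast h
  have := unitRadius_le_two_mul_unitRadius_zero (s := s) (b := a + 1) (by omega)
  have := unitRadius_le_two_mul_unitRadius_zero (s := s) (b := a' + 1) (by omega)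
  simp only [center_tooth_one, radius, ← mul_add, ← mul_sub]
  exact mul_le_mul_of_nonneg_left (by nlinarith [unitRadius_pos s 0]) (scale_pos s m).le

lemma separated_tooth_tooth_of_lt (m : Fin (s + 1)) (t : Fin s) {a a' : Fin s} (h : a < a') :
    Separated (tooth m t a') (tooth m t a) := by
  refine ⟨0, ?_⟩
  have := add_le_chainCenter_sub (fun b => (unitRadius_pos s b).le)
    (show (a : ℕ) + 1 < a' + 1 by omega)
  simp only [center_tooth_zero, radius]
  nlinarith [scale_pos s m]

lemma separated_or_separated {v w : Vertex s} (h : v ≠ w) :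
    Separated v w ∨ Separated w v := by
  rcases lt_trichotomy (comb v) (comb w) with hvw | hvw | hvw
  · exact .inl (separated_of_comb_lt hvw)
  swap
  · exact .inr (separated_of_comb_lt hvw)
  rcases v with ⟨m, j⟩ | ⟨m, t, a⟩ <;> rcases w with ⟨m', j'⟩ | ⟨m', t', a'⟩ <;>
    simp only [comb, Fin.val_inj] at hvw <;> subst hvw
  · have : j ≠ j' := fun hj => h (hj ▸ rfl)
    rcases this.lt_or_gt with hj | hj
    · exact .inl (separated_core_core m hj)
    · exact .inr (separated_core_core m hj)
  · exact .inr (separated_tooth_core m t' a' j)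
  · exact .inl (separated_tooth_core m t a j')
  · rcases lt_trichotomy t t' with ht | rfl | ht
    · exact .inl (separated_tooth_tooth_of_row_lt m a a' ht)
    · have : a ≠ a' := fun ha => h (ha ▸ rfl)
      rcases this.lt_or_gt with ha | ha
      · exact .inr (separated_tooth_tooth_of_lt m t ha)
      · exact .inl (separated_tooth_tooth_of_lt m t ha)
    · exact .inr (separated_tooth_tooth_of_row_lt m a' a ht)

lemma isCoinModel (s : ℕ) : IsCoinModel (graph s) center (radius (s := s)) where
  r_pos := radius_pos
  disj v w h := (separated_or_separated h).elim Separated.disjoint fun h' => h'.disjoint.symm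
  touch v w h := by
    rcases (fromRel_adj _ _ _).mp h |>.2 with h | h
    · exact touch_of_edge h
    · rw [Set.inter_comm]; exact touch_of_edge h

lemma adj_of_edge {v w : Vertex s} (hne : v ≠ w) (h : Edge v w) : (graph s).Adj v w :=
  (fromRel_adj _ _ _).mpr ⟨hne, .inl h⟩

lemma uphillReach_trunk (n : ℕ) (hn : n < s + 1) :
    UphillReach (graph s) radius n (root s) (core ⟨n, hn⟩ 0) := by
  induction n with
  | zero => exact .refl _ _ _
  | succ n ih =>
    refine (ih (by omega)).step (adj_of_edge (by simp) (.inl ⟨rfl, rfl, rfl⟩)) ?_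
    exact mul_le_mul_of_nonneg_right (scale_le_scale n.le_succ) (unitRadius_pos s 0).le

lemma uphillReach_core (m : Fin (s + 1)) (j : ℕ) (hj : j < 2 * s + 1) :
    UphillReach (graph s) radius (m + j) (root s) (core m ⟨j, hj⟩) := by
  induction j with
  | zero => exact uphillReach_trunk m m.isLt
  | succ j ih => exact (ih (by omega)).step (adj_of_edge (by simp) (.inr ⟨rfl, rfl⟩)) le_rfl

lemma exists_uphillReach_adj_tooth (m : Fin (s + 1)) (t : Fin s) (a : ℕ) (ha : a < s) :
    ∃ v, UphillReach (graph s) radius (m + (2 * t + 2) + a) (root s) v ∧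
      (graph s).Adj v (tooth m t ⟨a, ha⟩) ∧ radius v < radius (tooth m t ⟨a, ha⟩) := by
  induction a with
  | zero =>
    refine ⟨core m ⟨2 * t + 2, by omega⟩, uphillReach_core m _ _,
      adj_of_edge (by simp) ⟨rfl, rfl, rfl⟩, ?_⟩
    exact mul_lt_mul_of_pos_left (unitRadius_lt_unitRadius (by omega)) (scale_pos s m)
  | succ a ih =>
    obtain ⟨v, hv, hadj, hr⟩ := ih (by omega)
    refine ⟨_, hv.step hadj hr.le, adj_of_edge (by simp) ⟨rfl, rfl, rfl⟩, ?_⟩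
    exact mul_lt_mul_of_pos_left (unitRadius_lt_unitRadius (Nat.lt_succ_self _)) (scale_pos s m)

lemma tooth_mem_wreach {le : Vertex s → Vertex s → Prop} [Std.Refl le]
    (hK : ∀ a b, radius b < radius a → le a b) {d : ℕ} (hd : 4 * s ≤ d)
    (m : Fin (s + 1)) (t a : Fin s) : tooth m t a ∈ WReach (graph s) le d (root s) := by
  obtain ⟨v, hv, hadj, hr⟩ := exists_uphillReach_adj_tooth m t a a.isLt
  exact hv.mem_wreach hadj hr hK (by omega)

lemma le_ncard_wreach_root {le : Vertex s → Vertex s → Prop} [Std.Refl le]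
    (hK : ∀ a b, radius b < radius a → le a b) {d : ℕ} (hd : 4 * s ≤ d) :
    (s + 1) * s * s + 1 ≤ (WReach (graph s) le d (root s)).ncard := by
  let f : Option (Fin (s + 1) × Fin s × Fin s) → Vertex s :=
    fun o => o.elim (root s) fun p => tooth p.1 p.2.1 p.2.2
  have hf : Function.Injective f := by
    rintro (_ | ⟨m, t, a⟩) (_ | ⟨m', t', a'⟩) h <;> simp_all [f, root]
  calc (s + 1) * s * s + 1 = (Set.range f).ncard := by
        rw [Set.ncard_range_of_injective hf, Nat.card_eq_fintype_card]; simp [mul_assoc]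
    _ ≤ _ := Set.ncard_le_ncard (Set.range_subset_iff.2 fun o => ?_) (Set.toFinite _)
  rcases o with _ | ⟨m, t, a⟩
  · exact mem_wreach_self _ _ _ _
  · exact tooth_mem_wreach hK hd m t a

end KoebeComb

/-- There is a planar graph with a coin model all of whose Koebe orderings have weak
`d`-coloring number at least `c₀·d³`. -/
theorem koebe_wreach_lower_bound :
    ∃ c₀ : ℝ, 0 < c₀ ∧
      ∀ d : ℕ,
        ∃ (V : Type) (_ : Fintype V) (G : SimpleGraph V)
          (c : V → EuclideanSpace ℝ (Fin 2)) (r : V → ℝ),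
          IsCoinModel G c r ∧
          ∀ le : V → V → Prop, IsLinearOrder V le →
            (∀ a b : V, r b < r a → le a b) →
            ∃ u : V, c₀ * (d : ℝ) ^ 3 ≤ ((WReach G le d u).ncard : ℝ) := by
  refine ⟨1 / 512, by norm_num, fun d => ?_⟩
  set s := d / 4
  refine ⟨KoebeComb.Vertex s, inferInstance, KoebeComb.graph s, KoebeComb.center,
    KoebeComb.radius, KoebeComb.isCoinModel s, fun le _ hK => ⟨KoebeComb.root s, ?_⟩⟩
  have hcount : ((s : ℝ) + 1) * s * s + 1 ≤
      (WReach (KoebeComb.graph s) le d (KoebeComb.root s)).ncard := by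
    exact_mod_cast KoebeComb.le_ncard_wreach_root hK (Nat.mul_div_le d 4)
  have hd : (d : ℝ) ^ 3 ≤ (4 * s + 3) ^ 3 :=
    pow_le_pow_left₀ d.cast_nonneg (by exact_mod_cast (by omega : d ≤ 4 * s + 3)) 3
  nlinarith [(s.cast_nonneg : (0 : ℝ) ≤ s), sq_nonneg ((s : ℝ) - 1)]
end
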